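/- Let n, k be integers with 0 ≤ k ≤ n/2 and let J be the ideal of ℚ[x_1,...,x_n] described below. Then the quotient ring ℚ[x_1,...,x_n]/J is spanned as a ℚ-vector space by the residue classes of the squarefree monomials x_S := ∏_{j∈S} x_j, where S ranges over all subsets of {1,...,n} of cardinality ℓ with 0 ≤ ℓ ≤ k whose m-th smallest element is at least 2m for every 1 ≤ m ≤ ℓ (for S = ∅ the monomial is 1). -/

import Mathlib

/-!
Modulo `J`, `x_T · (x_1 + ⋯ + x_n) ≡ ∑_{i ∉ T} x_{T ∪ {i}}`, so the classes `v S` of the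
squarefree monomials, which span the quotient, satisfy `∑_{i ∉ T} v (T ∪ {i}) = 0` for every `T`,
and `v S = 0` once `#S > k`. If `S` is not the bottom row of a standard tableau, let `m` be the
last position at which its `m`-th element is below `2m`, and put `G = {1, …, 2m - 1} ∩ {1, …, n}`,
`U = S \ G`. In the relation for `T ∪ U` with `T ⊆ G`, `#T = m - 1`, the terms adding an
`i ∉ G` have a smaller last violation, so by induction every functional `φ` vanishing on the
tableau monomials turns `f B = φ (v (B ∪ U))`, for `m`-subsets `B ⊆ G`, into a function killed
by the down operator. As `#G < 2m`, the down operator is injective on `m`-subsets, because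
`‖up f‖² = ‖down f‖² + (#G - 2m) ‖f‖²`; hence `φ (v S) = f (S ∩ G) = 0`.
-/

open scoped BigOperators

/-- The variable `xᵢ` (for `1 ≤ i ≤ n`) of `ℚ[x₁,…,xₙ] = MvPolynomial (Fin n) ℚ`
(out-of-range indices give `0`). -/
noncomputable def yP (n : ℕ) (i : ℕ) : MvPolynomial (Fin n) ℚ :=
  if h : 1 ≤ i ∧ i ≤ n then MvPolynomial.X ⟨i - 1, by omega⟩ else 0

/-- The ideal `J` of `ℚ[x₁,…,xₙ]` generated by
(i) `∑ᵢ xᵢ`; (ii) `xᵢ²` for `1 ≤ i ≤ n`;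
(iii) `x_{i₁}⋯x_{i_{k+1}}` for all `1 ≤ i₁ < ⋯ < i_{k+1} ≤ n`. -/
noncomputable def Jid (n k : ℕ) : Ideal (MvPolynomial (Fin n) ℚ) :=
  Ideal.span
    ({∑ i ∈ Finset.Icc 1 n, yP n i} ∪
      {p | ∃ i, 1 ≤ i ∧ i ≤ n ∧ p = (yP n i) ^ 2} ∪
      {p | ∃ m : Fin (k + 1) → ℕ, StrictMono m ∧ 1 ≤ m 0 ∧ m (Fin.last k) ≤ n ∧
        p = ∏ j : Fin (k + 1), yP n (m j)})

/-- `S` is the bottom row of a standard tableau on a two-row shape `(n-ℓ,ℓ)`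
with `ℓ = S.card ≤ k`: its `m`-th smallest element is at least `2m`. -/
def goodS (n k : ℕ) (S : Finset ℕ) : Prop :=
  S ⊆ Finset.Icc 1 n ∧ S.card ≤ k ∧
    ∀ j ∈ S, 2 * (S.filter fun a => a ≤ j).card ≤ j

open Finset MvPolynomial

lemma yP_add_one (n : ℕ) (i : Fin n) : yP n (i + 1) = X i := by
  rw [yP, dif_pos ⟨Nat.le_add_left _ _, i.2⟩]
  rfl

lemma sum_yP_mem_Jid (n k : ℕ) : ∑ i ∈ Icc 1 n, yP n i ∈ Jid n k :=
  Ideal.subset_span (.inl (.inl rfl))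

lemma yP_sq_mem_Jid {n i : ℕ} (k : ℕ) (hi : i ∈ Icc 1 n) : yP n i ^ 2 ∈ Jid n k :=
  Ideal.subset_span (.inl (.inr ⟨i, (mem_Icc.1 hi).1, (mem_Icc.1 hi).2, rfl⟩))

lemma prod_yP_mem_Jid_of_lt_card {n k : ℕ} {S : Finset ℕ} (hS : S ⊆ Icc 1 n) (hk : k < #S) :
    ∏ j ∈ S, yP n j ∈ Jid n k := by
  obtain ⟨S', hS'S, hS'⟩ := exists_subset_card_eq (Nat.succ_le_of_lt hk)
  rw [← prod_sdiff hS'S]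
  refine Ideal.mul_mem_left _ _ (Ideal.subset_span (.inr ?_))
  let e := S'.orderIsoOfFin hS'
  have he : ∀ j, (e j : ℕ) ∈ Icc 1 n := fun j => hS (hS'S (e j).2)
  refine ⟨fun j => e j, fun a b hab => e.strictMono hab, (mem_Icc.1 (he 0)).1,
    (mem_Icc.1 (he (Fin.last k))).2, ?_⟩
  rw [← prod_coe_sort S']
  exact (Equiv.prod_comp e.toEquiv (fun x => yP n x)).symm

lemma sum_prod_insert_yP_mem_Jid {n : ℕ} (k : ℕ) {T : Finset ℕ} (hT : T ⊆ Icc 1 n) :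
    ∑ i ∈ Icc 1 n \ T, ∏ j ∈ insert i T, yP n j ∈ Jid n k := by
  have hsplit : (∏ j ∈ T, yP n j) * ∑ i ∈ Icc 1 n, yP n i
      = ∑ i ∈ Icc 1 n \ T, ∏ j ∈ insert i T, yP n j
        + ∑ i ∈ T, (∏ j ∈ T.erase i, yP n j) * yP n i ^ 2 := by
    rw [mul_sum, ← sum_sdiff hT]
    congr 1
    · exact sum_congr rfl fun i hi => by rw [prod_insert (mem_sdiff.1 hi).2, mul_comm]
    · exact sum_congr rfl fun i hi => by rw [← mul_prod_erase T _ hi]; ring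
  have hsq : ∑ i ∈ T, (∏ j ∈ T.erase i, yP n j) * yP n i ^ 2 ∈ Jid n k :=
    sum_mem fun i hi => Ideal.mul_mem_left _ _ (yP_sq_mem_Jid k (hT hi))
  have h := Ideal.mul_mem_left _ (∏ j ∈ T, yP n j) (sum_yP_mem_Jid n k)
  rw [hsplit] at h
  simpa using Ideal.sub_mem _ h hsq

lemma monomial_mem_Jid_of_two_le {n : ℕ} (k : ℕ) {d : Fin n →₀ ℕ} {i : Fin n} (hi : 2 ≤ d i) :
    monomial d (1 : ℚ) ∈ Jid n k := by
  have hd : d = (d - Finsupp.single i 2) + Finsupp.single i 2 :=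
    (tsub_add_cancel_of_le (Finsupp.single_le_iff.2 hi)).symm
  rw [hd, ← mul_one (1 : ℚ), ← monomial_mul, ← X_pow_eq_monomial, ← yP_add_one]
  exact Ideal.mul_mem_left _ _ (yP_sq_mem_Jid k (by simp [i.2]))

lemma monomial_eq_prod_yP {n : ℕ} {d : Fin n →₀ ℕ} (hd : ∀ i, d i ≤ 1) :
    monomial d (1 : ℚ) = ∏ j ∈ d.support.image (fun i : Fin n => (i : ℕ) + 1), yP n j := by
  rw [prod_image fun a _ b _ hab => Fin.ext (by simpa using hab), monomial_eq, C_1, one_mul,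
    Finsupp.prod]
  refine prod_congr rfl fun i hi => ?_
  rw [yP_add_one, le_antisymm (hd i) (Nat.one_le_iff_ne_zero.2 (Finsupp.mem_support_iff.1 hi)),
    pow_one]

lemma span_mk_prod_yP_eq_top (n k : ℕ) :
    Submodule.span ℚ ((fun S => Ideal.Quotient.mk (Jid n k) (∏ j ∈ S, yP n j)) ''
      {S | S ⊆ Icc 1 n}) = ⊤ := by
  have hmk : LinearMap.range (Ideal.Quotient.mkₐ ℚ (Jid n k)).toLinearMap = ⊤ :=
    LinearMap.range_eq_top.2 (Ideal.Quotient.mkₐ_surjective ℚ (Jid n k))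
  rw [eq_top_iff, ← hmk, LinearMap.range_eq_map, ← (basisMonomials (Fin n) ℚ).span_eq,
    Submodule.map_span_le]
  rintro _ ⟨d, rfl⟩
  by_cases hd : ∀ i, d i ≤ 1
  · refine Submodule.subset_span ⟨d.support.image fun i : Fin n => (i : ℕ) + 1, ?_, ?_⟩
    · intro j hj
      obtain ⟨i, -, rfl⟩ := mem_image.1 hj
      simp [i.2]
    · simp [coe_basisMonomials, monomial_eq_prod_yP hd]
  · obtain ⟨i, hi⟩ := not_forall.1 hd
    simp [coe_basisMonomials,
      Ideal.Quotient.eq_zero_iff_mem.2 (monomial_mem_Jid_of_two_le k (not_le.1 hi))]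

section Subsets

variable {α : Type*} [DecidableEq α] {G B B' T : Finset α} {m : ℕ}

lemma sum_sdiff_insert_eq_sum_filter_powersetCard {β : Type*} [AddCommMonoid β]
    (g : Finset α → β) (hT : T ⊆ G) :
    ∑ i ∈ G \ T, g (insert i T) = ∑ B ∈ G.powersetCard (#T + 1) with T ⊆ B, g B := by
  have himage : (G \ T).image (insert · T) = {B ∈ G.powersetCard (#T + 1) | T ⊆ B} := by
    rw [filter_powersetCard_subset T G (#T + 1) hT (by omega), add_tsub_cancel_left,
      powersetCard_one, map_eq_image, image_image]
    rfl
  rw [← himage, sum_image fun i hi j hj hij =>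
    (insert_inj (mem_sdiff.1 (mem_coe.1 hi)).2).1 hij]

lemma eq_iff_card_union_eq (hB : #B = m) (hB' : #B' = m) : B = B' ↔ #(B ∪ B') = m := by
  refine ⟨fun h => by rw [h, union_self, hB'], fun h => ?_⟩
  rw [eq_of_subset_of_card_le subset_union_left (h.trans hB.symm).le,
    ← eq_of_subset_of_card_le subset_union_right (h.trans hB'.symm).le]

/-- Entrywise, the operator identity `upᵀ up = downᵀ down + (#G - 2m) • id` on functions of
`m`-subsets of `G`. -/
lemma card_superset_pair_eq_card_subset_pair_add {K : Type*} [CommRing K] (hm : 0 < m)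
    (hB : B ∈ G.powersetCard m) (hB' : B' ∈ G.powersetCard m) :
    (#{C ∈ G.powersetCard (m + 1) | B ⊆ C ∧ B' ⊆ C} : K)
      = #{T ∈ G.powersetCard (m - 1) | T ⊆ B ∧ T ⊆ B'}
        + if B = B' then (#G : K) - 2 * m else 0 := by
  rw [mem_powersetCard] at hB hB'
  have hsup : {C ∈ G.powersetCard (m + 1) | B ⊆ C ∧ B' ⊆ C}
      = {C ∈ G.powersetCard (m + 1) | B ∪ B' ⊆ C} := by
    simp only [union_subset_iff]
  have hsub :
      {T ∈ G.powersetCard (m - 1) | T ⊆ B ∧ T ⊆ B'} = (B ∩ B').powersetCard (m - 1) := by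
    ext T
    simp only [mem_filter, mem_powersetCard, subset_inter_iff]
    exact ⟨fun ⟨⟨_, hT⟩, h⟩ => ⟨h, hT⟩, fun ⟨h, hT⟩ => ⟨⟨h.1.trans hB.1, hT⟩, h⟩⟩
  have hunion : m ≤ #(B ∪ B') := hB.2 ▸ card_le_card subset_union_left
  have hinter : #(B ∩ B') + #(B ∪ B') = 2 * m := by
    rw [card_inter_add_card_union, hB.2, hB'.2, two_mul]
  have hG : #(B ∪ B') ≤ #G := card_le_card (union_subset hB.1 hB'.1)
  rw [hsup, hsub, card_powersetCard]
  have hBB' := eq_iff_card_union_eq hB.2 hB'.2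
  obtain hu | hu | hu : #(B ∪ B') = m ∨ #(B ∪ B') = m + 1 ∨ m + 1 < #(B ∪ B') := by omega
  · rw [card_filter_powersetCard_subset _ _ _ (union_subset hB.1 hB'.1) (by omega), hu,
      show #(B ∩ B') = m by omega, add_tsub_cancel_left, Nat.choose_one_right,
      if_pos (hBB'.2 hu), Nat.choose_symm_of_eq_add (show m = m - 1 + 1 by omega),
      Nat.choose_one_right, Nat.cast_sub (by omega)]
    ring
  · rw [card_filter_powersetCard_subset _ _ _ (union_subset hB.1 hB'.1) (by omega), hu,
      show #(B ∩ B') = m - 1 by omega, if_neg (by rw [hBB']; omega)]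
    simp
  · rw [card_eq_zero.2 (filter_eq_empty_iff.2 fun C hC hBC => ?_),
      Nat.choose_eq_zero_of_lt (by omega), if_neg (by rw [hBB']; omega)]
    · simp
    · have := card_le_card hBC
      rw [(mem_powersetCard.1 hC).2] at this
      omega

end Subsets

lemma sum_sq_sum_filter {ι κ R : Type*} [CommSemiring R] (P : Finset ι) (Q : Finset κ)
    (r : ι → κ → Prop) [∀ i j, Decidable (r i j)] (f : ι → R) :
    ∑ C ∈ Q, (∑ B ∈ P with r B C, f B) ^ 2
      = ∑ B ∈ P, ∑ B' ∈ P, f B * f B' * #{C ∈ Q | r B C ∧ r B' C} := by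
  simp_rw [sq, sum_filter, sum_mul_sum, ite_zero_mul_ite_zero, card_filter, Nat.cast_sum,
    mul_sum, Nat.cast_ite, Nat.cast_one, Nat.cast_zero, mul_ite, mul_one, mul_zero]
  rw [sum_comm]
  exact sum_congr rfl fun _ _ => sum_comm

theorem eq_zero_of_sum_filter_superset_eq_zero {α K : Type*} [DecidableEq α] [Field K]
    [LinearOrder K] [IsStrictOrderedRing K] {G : Finset α} {m : ℕ} (hG : #G < 2 * m)
    {f : Finset α → K}
    (hf : ∀ T ∈ G.powersetCard (m - 1), ∑ B ∈ G.powersetCard m with T ⊆ B, f B = 0) :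
    ∀ B ∈ G.powersetCard m, f B = 0 := by
  set P := G.powersetCard m
  have hup : ∑ C ∈ G.powersetCard (m + 1), (∑ B ∈ P with B ⊆ C, f B) ^ 2
      = ∑ T ∈ G.powersetCard (m - 1), (∑ B ∈ P with T ⊆ B, f B) ^ 2
        + (#G - 2 * m) * ∑ B ∈ P, f B ^ 2 := by
    rw [sum_sq_sum_filter, sum_sq_sum_filter, mul_sum, ← sum_add_distrib]
    refine sum_congr rfl fun B hB => ?_
    rw [show ((#G : K) - 2 * m) * f B ^ 2 = f B * f B * ((#G : K) - 2 * m) by ring,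
      ← sum_ite_eq_of_mem P B (fun B' => f B * f B' * ((#G : K) - 2 * m)) hB,
      ← sum_add_distrib]
    refine sum_congr rfl fun B' hB' => ?_
    rw [card_superset_pair_eq_card_subset_pair_add (by omega) hB hB', mul_add, mul_ite, mul_zero]
  have hdown : ∑ T ∈ G.powersetCard (m - 1), (∑ B ∈ P with T ⊆ B, f B) ^ 2 = 0 :=
    sum_eq_zero fun T hT => by rw [hf T hT, sq, mul_zero]
  have hnonneg : 0 ≤ ∑ C ∈ G.powersetCard (m + 1), (∑ B ∈ P with B ⊆ C, f B) ^ 2 :=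
    sum_nonneg fun _ _ => sq_nonneg _
  have hG' : (#G : K) - 2 * m < 0 := by
    rw [sub_neg]; exact_mod_cast hG
  have hsq : ∑ B ∈ P, f B ^ 2 = 0 := by
    refine le_antisymm ?_ (sum_nonneg fun _ _ => sq_nonneg _)
    rw [hup, hdown, zero_add] at hnonneg
    exact nonpos_of_mul_nonneg_right hnonneg hG'
  intro B hB
  exact pow_eq_zero_iff two_ne_zero |>.1 <|
    (sum_eq_zero_iff_of_nonneg fun _ _ => sq_nonneg _).1 hsq B hB

/-- The largest `p` such that the `p`-th smallest element of `S` is less than `2 * p`, i.e. the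
last position at which `S` violates the tableau condition; `0` if there is none. -/
def maxViolation (S : Finset ℕ) : ℕ :=
  Nat.findGreatest (fun p => p ≤ #{a ∈ S | a < 2 * p}) #S

section maxViolation

variable {S : Finset ℕ} {p m : ℕ}

lemma le_maxViolation (hp : p ≤ #{a ∈ S | a < 2 * p}) : p ≤ maxViolation S :=
  Nat.le_findGreatest (hp.trans (card_filter_le _ _)) hp

lemma maxViolation_le_card_filter : maxViolation S ≤ #{a ∈ S | a < 2 * maxViolation S} :=
  Nat.findGreatest_spec (P := fun p => p ≤ #{a ∈ S | a < 2 * p}) (Nat.zero_le _) (Nat.zero_le _)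

lemma card_filter_lt_of_maxViolation_lt (hp : maxViolation S < p) : #{a ∈ S | a < 2 * p} < p :=
  lt_of_not_ge fun h => (le_maxViolation h).not_gt hp

lemma maxViolation_lt_of_forall (h : ∀ p, m ≤ p → #{a ∈ S | a < 2 * p} < p) :
    maxViolation S < m :=
  lt_of_not_ge fun hle => (maxViolation_le_card_filter.trans_lt (h _ hle)).false

lemma card_filter_lt_two_mul_maxViolation :
    #{a ∈ S | a < 2 * maxViolation S} = maxViolation S := by
  refine le_antisymm (Nat.le_of_lt_succ ?_) maxViolation_le_card_filter
  refine (card_le_card (monotone_filter_right S fun a ha => ?_)).trans_lt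
    (card_filter_lt_of_maxViolation_lt (Nat.lt_succ_self _))
  omega

lemma goodS_of_maxViolation_eq_zero {n k : ℕ} (hS : S ⊆ Icc 1 n) (hk : #S ≤ k)
    (h : maxViolation S = 0) : goodS n k S := by
  refine ⟨hS, hk, fun j hj => le_of_not_gt fun hlt => ?_⟩
  have hpos : 0 < #{a ∈ S | a ≤ j} := card_pos.2 ⟨j, mem_filter.2 ⟨hj, le_rfl⟩⟩
  have hsub : {a ∈ S | a ≤ j} ⊆ {a ∈ S | a < 2 * #{a ∈ S | a ≤ j}} :=
    monotone_filter_right S fun a ha => by omega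
  have := le_maxViolation (card_le_card hsub)
  omega

end maxViolation

lemma maxViolation_insert_union_lt {S T : Finset ℕ} {m i : ℕ} (hS : maxViolation S = m)
    (hTm : #T < m) (hi : 2 * m ≤ i) :
    maxViolation (insert i (T ∪ {a ∈ S | 2 * m ≤ a})) < m := by
  set U := {a ∈ S | 2 * m ≤ a}
  refine maxViolation_lt_of_forall fun p hp => ?_
  obtain rfl | hmp := hp.eq_or_lt
  · refine (card_le_card fun a ha => ?_).trans_lt hTm
    simp only [U, mem_filter, mem_insert, mem_union] at ha
    obtain ⟨rfl | haT | ⟨-, ha2m⟩, ha⟩ := ha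
    · omega
    · exact haT
    · omega
  have hsub : {a ∈ insert i (T ∪ U) | a < 2 * p} ⊆ insert i (T ∪ {a ∈ U | a < 2 * p}) := by
    intro a ha
    simp only [mem_filter, mem_insert, mem_union] at ha ⊢
    tauto
  have hdisj : Disjoint {a ∈ S | a < 2 * m} {a ∈ U | a < 2 * p} :=
    disjoint_left.2 fun a ha ha' => by
      simp only [U, mem_filter] at ha ha'
      omega
  have hS' : #{a ∈ S | a < 2 * m} + #{a ∈ U | a < 2 * p} < p := by
    rw [← card_union_of_disjoint hdisj]
    refine (card_le_card fun a ha => ?_).trans_lt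
      (card_filter_lt_of_maxViolation_lt (hS ▸ hmp))
    simp only [U, mem_union, mem_filter] at ha ⊢
    rcases ha with ⟨haS, ha⟩ | ⟨⟨haS, -⟩, ha⟩ <;> exact ⟨haS, by omega⟩
  rw [← hS, card_filter_lt_two_mul_maxViolation, hS] at hS'
  calc #{a ∈ insert i (T ∪ U) | a < 2 * p}
      ≤ #T + #{a ∈ U | a < 2 * p} + 1 :=
        (card_le_card hsub).trans ((card_insert_le _ _).trans (by grw [card_union_le]))
    _ < p := by omega

lemma card_filter_Icc_lt_two_mul_lt (n : ℕ) {m : ℕ} (hm : 0 < m) :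
    #{a ∈ Icc 1 n | a < 2 * m} < 2 * m :=
  calc #{a ∈ Icc 1 n | a < 2 * m} ≤ #(Ico 1 (2 * m)) :=
        card_le_card fun a ha => by simp only [mem_filter, mem_Icc, mem_Ico] at ha ⊢; omega
    _ < 2 * m := by simp only [Nat.card_Ico]; omega

section Straightening

variable {K M : Type*} [Field K] [AddCommGroup M] [Module K M] {n : ℕ} {v : Finset ℕ → M}

lemma sum_filter_superset_mem_of_sum_insert_eq_zero
    (hrel : ∀ T ⊆ Icc 1 n, ∑ i ∈ Icc 1 n \ T, v (insert i T) = 0) {V : Submodule K M}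
    {G U T : Finset ℕ} (hG : G ⊆ Icc 1 n) (hU : U ⊆ Icc 1 n) (hGU : Disjoint G U) (hT : T ⊆ G)
    (hout : ∀ i ∈ Icc 1 n \ (T ∪ U), i ∉ G → v (insert i (T ∪ U)) ∈ V) :
    ∑ B ∈ G.powersetCard (#T + 1) with T ⊆ B, v (B ∪ U) ∈ V := by
  have hwin : G \ T ⊆ Icc 1 n \ (T ∪ U) := fun i hi => by
    rw [mem_sdiff] at hi ⊢
    exact ⟨hG hi.1, fun hTU => (mem_union.1 hTU).elim hi.2 (disjoint_left.1 hGU hi.1)⟩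
  have h := hrel (T ∪ U) (union_subset (hT.trans hG) hU)
  rw [← sum_sdiff hwin, add_eq_zero_iff_neg_eq] at h
  rw [← sum_sdiff_insert_eq_sum_filter_powersetCard (fun B => v (B ∪ U)) hT]
  simp_rw [insert_union, ← h]
  refine V.neg_mem (V.sum_mem fun i hi => ?_)
  obtain ⟨hi, hiGT⟩ := mem_sdiff.1 hi
  exact hout i hi fun hiG =>
    hiGT (mem_sdiff.2 ⟨hiG, fun hiT => (mem_sdiff.1 hi).2 (mem_union_left _ hiT)⟩)

theorem mem_span_goodS_of_sum_insert_eq_zero [LinearOrder K] [IsStrictOrderedRing K] {k : ℕ}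
    (hrel : ∀ T ⊆ Icc 1 n, ∑ i ∈ Icc 1 n \ T, v (insert i T) = 0)
    (hbig : ∀ S ⊆ Icc 1 n, k < #S → v S = 0) {S : Finset ℕ} (hS : S ⊆ Icc 1 n) :
    v S ∈ Submodule.span K (v '' {S | goodS n k S}) := by
  set V := Submodule.span K (v '' {S | goodS n k S})
  induction hm : maxViolation S using Nat.strong_induction_on generalizing S with
  | _ m ih =>
  rcases lt_or_ge k #S with hk | hk
  · rw [hbig S hS hk]
    exact V.zero_mem
  obtain rfl | hm0 := Nat.eq_zero_or_pos m
  · exact Submodule.subset_span ⟨S, goodS_of_maxViolation_eq_zero hS hk hm, rfl⟩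
  set G := {a ∈ Icc 1 n | a < 2 * m}
  set U := {a ∈ S | 2 * m ≤ a}
  have hU : U ⊆ Icc 1 n := (filter_subset _ _).trans hS
  have hGU : Disjoint G U := disjoint_left.2 fun a ha ha' => by
    simp only [G, U, mem_filter] at ha ha'
    omega
  have hwindow : ∀ T ∈ G.powersetCard (m - 1),
      ∑ B ∈ G.powersetCard m with T ⊆ B, v (B ∪ U) ∈ V := by
    intro T hT
    rw [mem_powersetCard] at hT
    rw [show m = #T + 1 by omega]
    refine sum_filter_superset_mem_of_sum_insert_eq_zero hrel (filter_subset _ _) hU hGU hT.1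
      fun i hi hiG => ih _ ?_ (insert_subset (mem_sdiff.1 hi).1 ?_) rfl
    · refine maxViolation_insert_union_lt hm (show #T < m by omega) ?_
      simp only [G, mem_filter, not_and, not_lt] at hiG
      exact hiG (mem_sdiff.1 hi).1
    · exact union_subset (hT.1.trans (filter_subset _ _)) hU
  have hB : {a ∈ S | a < 2 * m} ∈ G.powersetCard m :=
    mem_powersetCard.2 ⟨filter_subset_filter _ hS, hm ▸ card_filter_lt_two_mul_maxViolation⟩
  have hBU : {a ∈ S | a < 2 * m} ∪ U = S := by
    simpa only [U, not_lt] using filter_union_filter_not_eq (p := (· < 2 * m)) S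
  refine (Subspace.forall_mem_dualAnnihilator_apply_eq_zero_iff V _).1 fun φ hφ => ?_
  rw [Submodule.mem_dualAnnihilator] at hφ
  rw [← hBU]
  exact eq_zero_of_sum_filter_superset_eq_zero (f := fun B => φ (v (B ∪ U)))
    (card_filter_Icc_lt_two_mul_lt n hm0)
    (fun T hT => by rw [← map_sum]; exact hφ _ (hwindow T hT)) _ hB

end Straightening

theorem quotientJ_spanned_by_tableau_monomials_general (n k : ℕ) :
    Submodule.span ℚ
        {q : MvPolynomial (Fin n) ℚ ⧸ Jid n k | ∃ S : Finset ℕ, goodS n k S ∧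
          q = Ideal.Quotient.mk (Jid n k) (∏ j ∈ S, yP n j)} = ⊤ := by
  set v : Finset ℕ → MvPolynomial (Fin n) ℚ ⧸ Jid n k :=
    fun S => Ideal.Quotient.mk (Jid n k) (∏ j ∈ S, yP n j)
  have hgood : {q | ∃ S, goodS n k S ∧ q = v S} = v '' {S | goodS n k S} := by
    ext
    simp [eq_comm]
  rw [hgood, eq_top_iff, ← span_mk_prod_yP_eq_top n k, Submodule.span_le]
  rintro _ ⟨S, hS, rfl⟩
  refine mem_span_goodS_of_sum_insert_eq_zero (fun T hT => ?_) (fun S hS hk => ?_) hS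
  · rw [← map_sum, Ideal.Quotient.eq_zero_iff_mem]
    exact sum_prod_insert_yP_mem_Jid k hT
  · exact Ideal.Quotient.eq_zero_iff_mem.2 (prod_yP_mem_Jid_of_lt_card hS hk)

/-- The classes of the squarefree monomials `x_S`, for `S` the bottom row of a
standard tableau on `(n-ℓ,ℓ)` with `0 ≤ ℓ ≤ k`, span `ℚ[x₁,…,xₙ]/J` over `ℚ`. -/
theorem quotientJ_spanned_by_tableau_monomials (n k : ℕ) (h : 2 * k ≤ n) :
    Submodule.span ℚ
        {q : MvPolynomial (Fin n) ℚ ⧸ Jid n k | ∃ S : Finset ℕ, goodS n k S ∧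
          q = Ideal.Quotient.mk (Jid n k) (∏ j ∈ S, yP n j)} = ⊤ :=
  quotientJ_spanned_by_tableau_monomials_general n k
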